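/- arXiv:1906.04269 — 3 statements merged into one kernel-verified Lean document; each statement's English description precedes it below -/
import Mathlib

section
/- Let R be a Metzler matrix all of whose eigenvalues have negative real part (so R is invertible), and let P be an entrywise nonnegative matrix of the same size. Then λ_max(R + P) < 0 if and only if ρ(R^{-1} P) < 1, where ρ denotes the spectral radius. -/
open Matrix

def IsMetzler {n : Type*} [Fintype n] [DecidableEq n] (M : Matrix n n ℝ) : Prop :=
  ∀ i j, i ≠ j → 0 ≤ M i j

def IsIrreducibleMatrix {n : Type*} [Fintype n] (M : Matrix n n ℝ) : Prop :=
  ∀ i j : n, Relation.ReflTransGen (fun a b => a ≠ b ∧ M a b ≠ 0) i j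

def IsEigOf {n : Type*} [Fintype n] (M : Matrix n n ℝ) (μ : ℂ) : Prop :=
  ∃ v : n → ℂ, v ≠ 0 ∧ M.map (Complex.ofReal) *ᵥ v = μ • v

noncomputable def lamMax {n : Type*} [Fintype n] (M : Matrix n n ℝ) : ℝ :=
  sSup {x : ℝ | ∃ μ : ℂ, IsEigOf M μ ∧ x = μ.re}

noncomputable def specRad {n : Type*} [Fintype n] (M : Matrix n n ℝ) : ℝ :=
  sSup {x : ℝ | ∃ μ : ℂ, IsEigOf M μ ∧ x = ‖μ‖}

noncomputable def Cplus {V E : Type*} [DecidableEq V] (tgt : E → V) : Matrix V E ℝ :=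
  fun i ℓ => if tgt ℓ = i then 1 else 0

noncomputable def Cminus {V E : Type*} [DecidableEq V] (src : E → V) : Matrix V E ℝ :=
  fun i ℓ => if src ℓ = i then 1 else 0

noncomputable def nbMatrix {V E : Type*} [DecidableEq V] (src tgt : E → V) : Matrix E E ℝ :=
  fun ℓ m => if tgt ℓ = src m ∧ tgt m ≠ src ℓ then 1 else 0

noncomputable def lineAdj {V E : Type*} [DecidableEq V] (src tgt : E → V) : Matrix E E ℝ :=
  fun ℓ m => if tgt ℓ = src m then 1 else 0

/-!
Write `G = -R⁻¹`. A Metzler Hurwitz matrix `M` has `-M⁻¹ ≥ 0`: for large `s` the matrix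
`1 + s⁻¹ M` is nonnegative with spectrum in the open unit disc, so `-s M⁻¹` is its Neumann series.
Since `R + P = R (1 - G P)`:
* if `R + P` is Hurwitz, `(1 - G P)⁻¹ = 1 + H P ≥ 0` with `H = -(R + P)⁻¹ ≥ 0`; an eigenvalue `ν` of
  `G P` with `‖ν‖ ≥ 1` and eigenvector `v` would give `|v| ≤ G P |v|`, i.e. `(1 - G P) |v| ≤ 0`,
  hence `|v| ≤ 0`;
* if `ρ(G P) < 1`, then `x = (1 - G P)⁻¹ G 1 ≥ 0` satisfies `(R + P) x = -1`, and a Metzler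
  matrix sending a nonnegative vector to a negative one is Hurwitz (Gershgorin in the norm
  weighted by `x`).
-/

open Filter
open scoped Matrix.Norms.Frobenius

theorem exists_norm_pow_lt_one_of_spectralRadius_lt_one {A : Type*} [NormedRing A]
    [NormedAlgebra ℂ A] [CompleteSpace A] (a : A) (h : spectralRadius ℂ a < 1) :
    ∃ k, ‖a ^ k‖ < 1 := by
  obtain ⟨k, hk_pos, hk⟩ := ((eventually_gt_atTop 0).and
    ((spectrum.pow_nnnorm_pow_one_div_tendsto_nhds_spectralRadius a).eventually
      (gt_mem_nhds h))).exists
  refine ⟨k, ?_⟩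
  by_contra! hle
  have : (1 : ENNReal) ≤ (‖a ^ k‖₊ : ENNReal) ^ (1 / k : ℝ) :=
    ENNReal.one_le_rpow (by exact_mod_cast hle) (by positivity)
  exact this.not_gt hk

theorem eventually_norm_add_lt {μ : ℂ} (hμ : μ.re < 0) : ∀ᶠ s : ℝ in atTop, ‖μ + s‖ < s := by
  filter_upwards [eventually_gt_atTop 0, eventually_gt_atTop (‖μ‖ ^ 2 / (2 * -μ.re))]
    with s hs hμs
  rw [div_lt_iff₀ (by linarith)] at hμs
  have h : ‖μ + s‖ ^ 2 < s ^ 2 := by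
    rw [Complex.sq_norm, Complex.normSq_apply] at hμs ⊢
    simp only [Complex.add_re, Complex.ofReal_re, Complex.add_im, Complex.ofReal_im, add_zero]
    nlinarith
  exact lt_of_pow_lt_pow_left₀ 2 hs.le h

section

variable {n : Type*} [Fintype n] [DecidableEq n]

def IsHurwitz (M : Matrix n n ℝ) : Prop :=
  ∀ μ ∈ spectrum ℂ (M.map Complex.ofReal), μ.re < 0

def IsSchurStable (M : Matrix n n ℝ) : Prop :=
  ∀ μ ∈ spectrum ℂ (M.map Complex.ofReal), ‖μ‖ < 1

variable (n) in
def nonnegMatrices : Subsemiring (Matrix n n ℝ) where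
  carrier := {M | ∀ i j, 0 ≤ M i j}
  zero_mem' _ _ := le_rfl
  one_mem' i j := by by_cases h : i = j <;> simp [Matrix.one_apply, h]
  add_mem' hA hB i j := add_nonneg (hA i j) (hB i j)
  mul_mem' hA hB i j := Finset.sum_nonneg fun k _ => mul_nonneg (hA i k) (hB k j)

theorem isEigOf_iff_mem_spectrum (M : Matrix n n ℝ) (μ : ℂ) :
    IsEigOf M μ ↔ μ ∈ spectrum ℂ (M.map Complex.ofReal) := by
  rw [← Matrix.spectrum_toLin', ← Module.End.hasEigenvalue_iff_mem_spectrum]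
  constructor
  · rintro ⟨v, hv, hMv⟩
    exact Module.End.hasEigenvalue_of_hasEigenvector ⟨Module.End.mem_eigenspace_iff.mpr hMv, hv⟩
  · intro h
    obtain ⟨v, hv_mem, hv⟩ := h.exists_hasEigenvector
    exact ⟨v, hv, Module.End.mem_eigenspace_iff.mp hv_mem⟩

theorem sSup_eig_lt_iff [Nonempty n] (M : Matrix n n ℝ) (f : ℂ → ℝ) (a : ℝ) :
    sSup {x : ℝ | ∃ μ : ℂ, IsEigOf M μ ∧ x = f μ} < a ↔
      ∀ μ ∈ spectrum ℂ (M.map Complex.ofReal), f μ < a := by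
  have hset : {x : ℝ | ∃ μ : ℂ, IsEigOf M μ ∧ x = f μ} =
      f '' spectrum ℂ (M.map Complex.ofReal) := by
    ext x
    simp only [isEigOf_iff_mem_spectrum, Set.mem_ofPred_eq, Set.mem_image, eq_comm]
  have hfin : (f '' spectrum ℂ (M.map Complex.ofReal)).Finite :=
    (Matrix.finite_spectrum (M.map Complex.ofReal)).image f
  have hne : (f '' spectrum ℂ (M.map Complex.ofReal)).Nonempty :=
    (spectrum.nonempty (M.map Complex.ofReal)).image f
  rw [hset, hfin.csSup_lt_iff hne, Set.forall_mem_image]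

theorem lamMax_neg_iff [Nonempty n] (M : Matrix n n ℝ) : lamMax M < 0 ↔ IsHurwitz M :=
  sSup_eig_lt_iff M Complex.re 0

theorem specRad_lt_one_iff [Nonempty n] (M : Matrix n n ℝ) : specRad M < 1 ↔ IsSchurStable M :=
  sSup_eig_lt_iff M norm 1

theorem isSchurStable_neg {M : Matrix n n ℝ} : IsSchurStable (-M) ↔ IsSchurStable M := by
  rw [IsSchurStable, Matrix.map_neg _ Complex.ofReal_neg, ← spectrum.neg_eq,
    ← Set.image_neg_eq_neg, Set.forall_mem_image]
  simp only [norm_neg, IsSchurStable]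

theorem tsum_mem_nonnegMatrices {f : ℕ → Matrix n n ℝ} (hf : Summable f)
    (h : ∀ k, f k ∈ nonnegMatrices n) : ∑' k, f k ∈ nonnegMatrices n := fun i j =>
  (Pi.hasSum.mp (Pi.hasSum.mp hf.hasSum i) j).nonneg fun k => h k i j

theorem mulVec_mono {M : Matrix n n ℝ} (hM : M ∈ nonnegMatrices n) {v w : n → ℝ} (h : v ≤ w) :
    M *ᵥ v ≤ M *ᵥ w := fun i =>
  Finset.sum_le_sum fun j _ => mul_le_mul_of_nonneg_left (h j) (hM i j)

theorem norm_map_ofReal_mulVec_le {N : Matrix n n ℝ} (hN : N ∈ nonnegMatrices n) (v : n → ℂ)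
    (i : n) : ‖(N.map Complex.ofReal *ᵥ v) i‖ ≤ (N *ᵥ fun j => ‖v j‖) i :=
  norm_sum_le_of_le _ fun j _ => by
    simp only [Matrix.map_apply]
    rw [norm_mul, Complex.norm_real, Real.norm_of_nonneg (hN i j)]

theorem IsSchurStable.exists_nonneg_one_sub_mul_eq_one [Nonempty n] {N : Matrix n n ℝ}
    (hρ : IsSchurStable N) (hN : N ∈ nonnegMatrices n) :
    ∃ X ∈ nonnegMatrices n, (1 - N) * X = 1 := by
  obtain ⟨k, hk⟩ := exists_norm_pow_lt_one_of_spectralRadius_lt_one (N.map Complex.ofReal)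
    (spectrum.spectralRadius_lt_of_forall_lt _ fun μ hμ => by exact_mod_cast hρ μ hμ)
  have hk : ‖N ^ k‖ < 1 := calc
    ‖N ^ k‖ = ‖(N ^ k).map Complex.ofReal‖ :=
      (Matrix.frobenius_norm_map_eq _ _ Complex.norm_real).symm
    _ = ‖N.map Complex.ofReal ^ k‖ := congrArg norm (Matrix.map_pow N Complex.ofRealHom k)
    _ < 1 := hk
  -- `1 - N` divides `1 - N ^ k`, which is inverted by a norm-convergent geometric series
  refine ⟨(∑ i ∈ Finset.range k, N ^ i) * ∑' j, (N ^ k) ^ j, ?_, ?_⟩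
  · exact mul_mem (sum_mem fun i _ => pow_mem hN i) (tsum_mem_nonnegMatrices
      (summable_geometric_of_norm_lt_one hk) fun j => pow_mem (pow_mem hN k) j)
  · rw [← mul_assoc, mul_neg_geom_sum]
    exact mul_neg_geom_series _ hk

theorem IsMetzler.exists_nonneg_mul_eq_neg_one [Nonempty n] {M : Matrix n n ℝ}
    (hM : IsMetzler M) (hH : IsHurwitz M) :
    ∃ G ∈ nonnegMatrices n, G * M = -1 ∧ M * G = -1 := by
  obtain ⟨s, hs, hs_diag, hs_spec⟩ : ∃ s : ℝ, 0 < s ∧ (∀ i, -M i i ≤ s) ∧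
      ∀ μ ∈ spectrum ℂ (M.map Complex.ofReal), ‖μ + s‖ < s :=
    ((eventually_gt_atTop 0).and ((eventually_all.2 fun i => eventually_ge_atTop (-M i i)).and
      ((eventually_all_finite (Matrix.finite_spectrum _)).2 fun μ hμ =>
        eventually_norm_add_lt (hH μ hμ)))).exists
  have hN : 1 + s⁻¹ • M ∈ nonnegMatrices n := by
    intro i j
    rcases eq_or_ne i j with rfl | hij
    · have h : 0 ≤ s⁻¹ * (s + M i i) :=
        mul_nonneg (inv_nonneg.2 hs.le) (by linarith [hs_diag i])
      simpa [mul_add, inv_mul_cancel₀ hs.ne'] using h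
    · simpa [Matrix.one_apply_ne hij] using mul_nonneg (inv_nonneg.2 hs.le) (hM i j hij)
  have hN_spec : IsSchurStable (1 + s⁻¹ • M) := by
    have hmap : (1 + s⁻¹ • M).map Complex.ofReal =
        algebraMap ℂ _ 1 + (s⁻¹ : ℂ) • M.map Complex.ofReal := by
      ext i j
      by_cases hij : i = j <;> simp [hij]
    rw [IsSchurStable, hmap, ← spectrum.singleton_add_eq,
      spectrum.smul_eq_smul _ _ (spectrum.nonempty _)]
    rintro _ ⟨_, rfl, _, ⟨μ, hμ, rfl⟩, rfl⟩
    have hs' : (s : ℂ) ≠ 0 := by exact_mod_cast hs.ne'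
    show ‖1 + (s : ℂ)⁻¹ * μ‖ < 1
    rw [show 1 + (s : ℂ)⁻¹ * μ = (μ + s) / s by field_simp; ring, norm_div, Complex.norm_real,
      Real.norm_of_nonneg hs.le, div_lt_one hs]
    exact hs_spec μ hμ
  obtain ⟨X, hX, hNX⟩ := hN_spec.exists_nonneg_one_sub_mul_eq_one hN
  rw [sub_add_cancel_left] at hNX
  have hMX : M * -(s⁻¹ • X) = 1 := by
    rw [← hNX, mul_neg, neg_mul, Matrix.mul_smul, Matrix.smul_mul]
  refine ⟨s⁻¹ • X, fun i j => mul_nonneg (inv_nonneg.2 hs.le) (hX i j), ?_, ?_⟩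
  · rw [← neg_eq_iff_eq_neg, ← neg_mul]
    exact mul_eq_one_comm.mp hMX
  · rw [← neg_eq_iff_eq_neg, ← mul_neg]
    exact hMX

theorem IsMetzler.isHurwitz_of_mulVec_neg {A : Matrix n n ℝ} (hA : IsMetzler A) {x : n → ℝ}
    (hx : 0 ≤ x) (hAx : ∀ i, (A *ᵥ x) i < 0) : IsHurwitz A := by
  intro μ hμ
  obtain ⟨v, hv, hAv⟩ := (isEigOf_iff_mem_spectrum A μ).2 hμ
  have hoff : ∀ i, 0 ≤ ∑ j ∈ Finset.univ.erase i, A i j * x j := fun i =>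
    Finset.sum_nonneg fun j hj => mul_nonneg (hA i j (Finset.ne_of_mem_erase hj).symm) (hx j)
  have hrow : ∀ i, A i i * x i + ∑ j ∈ Finset.univ.erase i, A i j * x j < 0 := fun i =>
    (Finset.add_sum_erase Finset.univ (fun j => A i j * x j) (Finset.mem_univ i)).trans_lt (hAx i)
  have hx_pos : ∀ i, 0 < x i := fun i => by
    by_contra! h
    have hxi : x i = 0 := le_antisymm h (hx i)
    exact (hrow i).not_ge (by rw [hxi, mul_zero, zero_add]; exact hoff i)
  -- a Gershgorin argument in the weighted norm `max_j ‖v j‖ / x j`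
  obtain ⟨j₀, hj₀⟩ := Function.ne_iff.1 hv
  obtain ⟨i, -, hi⟩ := Finset.exists_max_image Finset.univ (fun j => ‖v j‖ / x j)
    ⟨j₀, Finset.mem_univ j₀⟩
  set t := ‖v i‖ / x i
  have hvt : ∀ j, ‖v j‖ ≤ t * x j := fun j =>
    (div_le_iff₀ (hx_pos j)).1 (hi j (Finset.mem_univ j))
  have ht : 0 < t := pos_of_mul_pos_left ((norm_pos_iff.2 hj₀).trans_le (hvt j₀)) (hx j₀)
  have hvi : ‖v i‖ = t * x i := (div_mul_cancel₀ _ (hx_pos i).ne').symm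
  have hsplit : (μ - A i i) * v i = ∑ j ∈ Finset.univ.erase i, (A i j : ℂ) * v j := by
    have := congrFun hAv i
    simp only [Matrix.mulVec, dotProduct, Matrix.map_apply, Pi.smul_apply, smul_eq_mul] at this
    rw [← Finset.add_sum_erase _ _ (Finset.mem_univ i)] at this
    linear_combination -this
  have hbound : ‖μ - A i i‖ * ‖v i‖ < -A i i * ‖v i‖ := calc
    ‖μ - A i i‖ * ‖v i‖ = ‖∑ j ∈ Finset.univ.erase i, (A i j : ℂ) * v j‖ := by
      rw [← norm_mul, hsplit]
    _ ≤ ∑ j ∈ Finset.univ.erase i, A i j * (t * x j) :=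
      norm_sum_le_of_le _ fun j hj => by
        rw [norm_mul, Complex.norm_real,
          Real.norm_of_nonneg (hA i j (Finset.ne_of_mem_erase hj).symm)]
        exact mul_le_mul_of_nonneg_left (hvt j) (hA i j (Finset.ne_of_mem_erase hj).symm)
    _ = t * ∑ j ∈ Finset.univ.erase i, A i j * x j := by
      rw [Finset.mul_sum]
      exact Finset.sum_congr rfl fun j _ => by ring
    _ < t * (-A i i * x i) := mul_lt_mul_of_pos_left (by linarith [hrow i]) ht
    _ = -A i i * ‖v i‖ := by rw [hvi]; ring
  have hnorm : ‖μ - A i i‖ < -A i i := lt_of_mul_lt_mul_right hbound (norm_nonneg _)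
  calc μ.re = (μ - A i i).re + A i i := by simp
    _ ≤ ‖μ - A i i‖ + A i i := by gcongr; exact Complex.re_le_norm _
    _ < 0 := by linarith

theorem isSchurStable_mul_of_isHurwitz_add [Nonempty n] {R P G : Matrix n n ℝ}
    (hRP : IsMetzler (R + P)) (hRP_hur : IsHurwitz (R + P)) (hG : G ∈ nonnegMatrices n)
    (hGR : G * R = -1) (hP : P ∈ nonnegMatrices n) : IsSchurStable (G * P) := by
  obtain ⟨H, hH, -, hRPH⟩ := hRP.exists_nonneg_mul_eq_neg_one hRP_hur
  have hinv : (1 - G * P) * (1 + H * P) = 1 := by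
    have h1 : 1 - G * P = -(G * (R + P)) := by
      rw [mul_add, hGR, neg_add, neg_neg, sub_eq_add_neg]
    have h2 : (R + P) * (1 + H * P) = R := by
      rw [mul_add, mul_one, ← mul_assoc, hRPH, neg_one_mul, add_neg_cancel_right]
    rw [h1, neg_mul, mul_assoc, h2, hGR, neg_neg]
  intro ν hν
  by_contra! hν1
  obtain ⟨v, hv, hGPv⟩ := (isEigOf_iff_mem_spectrum _ ν).2 hν
  set w : n → ℝ := fun i => ‖v i‖
  have hw : w ≤ (G * P) *ᵥ w := fun i => calc
    w i ≤ ‖ν‖ * w i := le_mul_of_one_le_left (norm_nonneg _) hν1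
    _ = ‖((G * P).map Complex.ofReal *ᵥ v) i‖ := by
      rw [hGPv, Pi.smul_apply, smul_eq_mul, norm_mul]
    _ ≤ ((G * P) *ᵥ w) i := norm_map_ofReal_mulVec_le (mul_mem hG hP) v i
  have hw_nonpos : w ≤ 0 := calc
    w = (1 + H * P) *ᵥ ((1 - G * P) *ᵥ w) := by
      rw [mulVec_mulVec, mul_eq_one_comm.mp hinv, one_mulVec]
    _ ≤ (1 + H * P) *ᵥ 0 := mulVec_mono (add_mem (one_mem _) (mul_mem hH hP)) (by
      rw [sub_mulVec, one_mulVec]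
      exact sub_nonpos.2 hw)
    _ = 0 := mulVec_zero _
  exact hv (funext fun i => norm_eq_zero.1 ((hw_nonpos i).antisymm (norm_nonneg _)))

theorem isHurwitz_add_of_isSchurStable_mul [Nonempty n] {R P G : Matrix n n ℝ}
    (hRP : IsMetzler (R + P)) (hG : G ∈ nonnegMatrices n) (hRG : R * G = -1)
    (hP : P ∈ nonnegMatrices n) (hρ : IsSchurStable (G * P)) : IsHurwitz (R + P) := by
  obtain ⟨X, hX, hGPX⟩ := hρ.exists_nonneg_one_sub_mul_eq_one (mul_mem hG hP)
  have hfac : R + P = R * (1 - G * P) := by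
    rw [mul_sub, mul_one, ← mul_assoc, hRG, neg_one_mul, sub_neg_eq_add]
  have hx : (R + P) *ᵥ ((X * G) *ᵥ 1) = -1 := by
    rw [mulVec_mulVec, hfac, mul_assoc, ← mul_assoc (1 - G * P), hGPX, one_mul, hRG,
      neg_mulVec, one_mulVec]
  refine hRP.isHurwitz_of_mulVec_neg (x := (X * G) *ᵥ 1) ?_ fun i => ?_
  · simpa using mulVec_mono (mul_mem hX hG) (zero_le_one : (0 : n → ℝ) ≤ 1)
  · rw [hx]
    exact neg_one_lt_zero

end

theorem stmt7 {n : Type*} [Fintype n] [DecidableEq n] [Nonempty n]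
    (R P : Matrix n n ℝ) (hMet : IsMetzler R)
    (hHur : ∀ μ : ℂ, IsEigOf R μ → μ.re < 0)
    (hP : ∀ i j, 0 ≤ P i j) :
    lamMax (R + P) < 0 ↔ specRad (R⁻¹ * P) < 1 := by
  obtain ⟨G, hG, hGR, hRG⟩ :=
    hMet.exists_nonneg_mul_eq_neg_one fun μ hμ => hHur μ ((isEigOf_iff_mem_spectrum R μ).2 hμ)
  have hRP : IsMetzler (R + P) := fun i j hij => add_nonneg (hMet i j hij) (hP i j)
  have hRinv : R⁻¹ * P = -(G * P) := by
    rw [Matrix.inv_eq_left_inv (B := -G) (by rw [neg_mul, hGR, neg_neg]), neg_mul]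
  rw [lamMax_neg_iff, specRad_lt_one_iff, hRinv, isSchurStable_neg]
  exact ⟨(isSchurStable_mul_of_isHurwitz_add hRP · hG hGR hP),
    isHurwitz_add_of_isSchurStable_mul hRP hG hRG hP⟩
end

section
/- With R = [[-δI, O], [δC_-ᵀ, -(β+2δ)I]] and P = [[O, βC_+], [O, βHᵀ]] as block matrices (blocks of sizes N and M), where β, δ > 0, the spectral radius satisfies ρ(R^{-1}P) = (β/(β+2δ)) · ρ(A_{L(G)} + H), where A_{L(G)}ᵀ = C_-ᵀ C_+. -/
open Matrix

open Polynomial Pointwise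

section Aux
variable {n : Type*} [Fintype n] [DecidableEq n]

lemma eval_charpoly' (A : Matrix n n ℂ) (μ : ℂ) :
    (A.charpoly).eval μ = (μ • (1 : Matrix n n ℂ) - A).det := by
  rw [Matrix.charpoly, ← Polynomial.coe_evalRingHom, RingHom.map_det]
  congr 1
  ext i j
  by_cases h : i = j <;>
    simp [h, charmatrix_apply, Matrix.one_apply, Matrix.diagonal_apply]

lemma isEigOf_iff_det (M : Matrix n n ℝ) (μ : ℂ) :
    IsEigOf M μ ↔ (M.map Complex.ofReal - μ • 1).det = 0 := by
  rw [← Matrix.exists_mulVec_eq_zero_iff]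
  constructor
  · rintro ⟨v, hv, h⟩
    exact ⟨v, hv, by rw [Matrix.sub_mulVec, Matrix.smul_mulVec, Matrix.one_mulVec, h,
      sub_self]⟩
  · rintro ⟨v, hv, h⟩
    refine ⟨v, hv, ?_⟩
    rw [Matrix.sub_mulVec, Matrix.smul_mulVec, Matrix.one_mulVec, sub_eq_zero] at h
    exact h

lemma isEigOf_iff_root (M : Matrix n n ℝ) (μ : ℂ) :
    IsEigOf M μ ↔ ((M.map Complex.ofReal).charpoly).eval μ = 0 := by
  rw [isEigOf_iff_det, eval_charpoly']
  have : μ • (1 : Matrix n n ℂ) - M.map Complex.ofReal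
      = (-1 : ℂ) • (M.map Complex.ofReal - μ • 1) := by
    simp [smul_sub, sub_eq_add_neg, add_comm]
  rw [this, Matrix.det_smul]
  simp [pow_ne_zero]

lemma isEigOf_transpose (M : Matrix n n ℝ) (μ : ℂ) :
    IsEigOf Mᵀ μ ↔ IsEigOf M μ := by
  rw [isEigOf_iff_det, isEigOf_iff_det]
  have : Mᵀ.map Complex.ofReal - μ • 1 = (M.map Complex.ofReal - μ • 1)ᵀ := by
    ext i j
    by_cases h : i = j <;> simp [Matrix.one_apply, h, eq_comm]
  rw [this, Matrix.det_transpose]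

lemma normSet_finite (M : Matrix n n ℝ) :
    {x : ℝ | ∃ μ : ℂ, IsEigOf M μ ∧ x = ‖μ‖}.Finite := by
  have h1 : {μ : ℂ | IsEigOf M μ}.Finite := by
    have := Polynomial.finite_setOf_isRoot
      (p := (M.map Complex.ofReal).charpoly) (Matrix.charpoly_monic _).ne_zero
    refine this.subset ?_
    intro μ hμ
    exact (isEigOf_iff_root M μ).mp hμ
  have : {x : ℝ | ∃ μ : ℂ, IsEigOf M μ ∧ x = ‖μ‖} = (fun μ : ℂ => ‖μ‖) '' {μ | IsEigOf M μ} := by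
    ext x; constructor
    · rintro ⟨μ, h, rfl⟩; exact ⟨μ, h, rfl⟩
    · rintro ⟨μ, h, rfl⟩; exact ⟨μ, h, rfl⟩
  rw [this]
  exact h1.image _

end Aux

section Aux2
variable {n : Type*} [Fintype n] [DecidableEq n]

lemma exists_eig (M : Matrix n n ℝ) (h : Fintype.card n ≠ 0) : ∃ μ, IsEigOf M μ := by
  have hp : ((M.map Complex.ofReal).charpoly).natDegree ≠ 0 := by
    rw [Matrix.charpoly_natDegree_eq_dim]; exact h
  obtain ⟨z, hz⟩ := Complex.exists_root (f := (M.map Complex.ofReal).charpoly)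
    (Polynomial.natDegree_pos_iff_degree_pos.mp (Nat.pos_of_ne_zero hp))
  exact ⟨z, (isEigOf_iff_root M z).mpr hz⟩

lemma specRad_transpose (M : Matrix n n ℝ) : specRad Mᵀ = specRad M := by
  unfold specRad
  congr 1
  ext x
  simp only [Set.mem_setOf_eq, isEigOf_transpose]

lemma specRad_smul (a : ℝ) (ha : a ≠ 0) (M : Matrix n n ℝ) :
    specRad (a • M) = |a| * specRad M := by
  have hac : (a : ℂ) ≠ 0 := by exact_mod_cast ha
  have key : ∀ μ : ℂ, IsEigOf (a • M) μ ↔ IsEigOf M ((a : ℂ)⁻¹ * μ) := by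
    intro μ
    have hmap : (a • M).map Complex.ofReal = (a : ℂ) • M.map Complex.ofReal := by
      ext i j; simp [Complex.ofReal_mul]
    unfold IsEigOf
    rw [hmap]
    refine exists_congr fun v => and_congr_right fun hv => ?_
    rw [Matrix.smul_mulVec, mul_smul]
    exact ⟨fun h => by rw [← h, inv_smul_smul₀ hac], fun h => by rw [h, smul_inv_smul₀ hac]⟩
  have hset : {x : ℝ | ∃ μ : ℂ, IsEigOf (a • M) μ ∧ x = ‖μ‖}
      = |a| • {x : ℝ | ∃ μ : ℂ, IsEigOf M μ ∧ x = ‖μ‖} := by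
    ext x
    simp only [Set.mem_smul_set, Set.mem_setOf_eq]
    constructor
    · rintro ⟨μ, hμ, rfl⟩
      refine ⟨‖(a : ℂ)⁻¹ * μ‖, ⟨_, (key μ).mp hμ, rfl⟩, ?_⟩
      rw [norm_mul, norm_inv, Complex.norm_real, Real.norm_eq_abs, smul_eq_mul]
      field_simp
    · rintro ⟨y, ⟨ν, hν, rfl⟩, rfl⟩
      refine ⟨(a : ℂ) * ν, (key _).mpr (by rwa [← mul_assoc, inv_mul_cancel₀ hac, one_mul]), ?_⟩
      rw [norm_mul, Complex.norm_real, Real.norm_eq_abs, smul_eq_mul]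
  unfold specRad
  rw [hset, Real.sSup_smul_of_nonneg (abs_nonneg a), smul_eq_mul]

end Aux2

lemma isEigOf_fromBlocks {N M : ℕ} (X : Matrix (Fin N) (Fin M) ℝ)
    (Y : Matrix (Fin M) (Fin M) ℝ) (μ : ℂ) :
    IsEigOf (Matrix.fromBlocks 0 X 0 Y) μ ↔ ((μ = 0 ∧ N ≠ 0) ∨ IsEigOf Y μ) := by
  rw [isEigOf_iff_det, isEigOf_iff_det]
  have h1 : (Matrix.fromBlocks 0 X 0 Y).map Complex.ofReal - μ • 1
      = Matrix.fromBlocks (-(μ • (1 : Matrix (Fin N) (Fin N) ℂ))) (X.map Complex.ofReal) 0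
          (Y.map Complex.ofReal - μ • 1) := by
    ext (i | i) (j | j) <;>
      simp [Matrix.one_apply, Matrix.fromBlocks, Matrix.map_apply]
  rw [h1, Matrix.det_fromBlocks_zero₂₁]
  have h2 : (-(μ • (1 : Matrix (Fin N) (Fin N) ℂ))).det = (-μ) ^ N := by
    rw [← neg_smul, Matrix.det_smul, Matrix.det_one, mul_one]
    simp
  rw [h2, mul_eq_zero, pow_eq_zero_iff', neg_eq_zero]

lemma specRad_fromBlocks {N M : ℕ} (X : Matrix (Fin N) (Fin M) ℝ)
    (Y : Matrix (Fin M) (Fin M) ℝ) :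
    specRad (Matrix.fromBlocks 0 X 0 Y) = specRad Y := by
  rcases Nat.eq_zero_or_pos M with hM | hM
  · subst hM
    have hY : ∀ μ : ℂ, ¬ IsEigOf Y μ := by
      rintro μ ⟨v, hv, -⟩
      exact hv (Subsingleton.elim v 0)
    have h1 : {x : ℝ | ∃ μ : ℂ, IsEigOf Y μ ∧ x = ‖μ‖} = ∅ := by
      ext x; simp [hY]
    unfold specRad
    rw [h1, Real.sSup_empty]
    rcases Nat.eq_zero_or_pos N with hN | hN
    · have h2 : {x : ℝ | ∃ μ : ℂ, IsEigOf (Matrix.fromBlocks 0 X 0 Y) μ ∧ x = ‖μ‖} = ∅ := by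
        ext x
        simp only [Set.mem_setOf_eq, Set.mem_empty_iff_false, iff_false, not_exists]
        rintro μ ⟨hμ, -⟩
        rcases (isEigOf_fromBlocks X Y μ).mp hμ with ⟨-, h⟩ | h
        · exact h hN
        · exact hY μ h
      rw [h2, Real.sSup_empty]
    · have h2 : {x : ℝ | ∃ μ : ℂ, IsEigOf (Matrix.fromBlocks 0 X 0 Y) μ ∧ x = ‖μ‖} = {0} := by
        ext x
        simp only [Set.mem_setOf_eq, Set.mem_singleton_iff]
        constructor
        · rintro ⟨μ, hμ, rfl⟩
          rcases (isEigOf_fromBlocks X Y μ).mp hμ with ⟨rfl, -⟩ | h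
          · simp
          · exact absurd h (hY μ)
        · rintro rfl
          exact ⟨0, (isEigOf_fromBlocks X Y 0).mpr (Or.inl ⟨rfl, hN.ne'⟩), by simp⟩
      rw [h2, csSup_singleton]
  · have hex : ∃ μ : ℂ, IsEigOf Y μ := exists_eig Y (by simp [hM.ne'])
    obtain ⟨μ₀, hμ₀⟩ := hex
    set S := {x : ℝ | ∃ μ : ℂ, IsEigOf Y μ ∧ x = ‖μ‖} with hS
    set T := {x : ℝ | ∃ μ : ℂ, IsEigOf (Matrix.fromBlocks 0 X 0 Y) μ ∧ x = ‖μ‖} with hT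
    have hSsub : S ⊆ T := by
      rintro x ⟨μ, hμ, rfl⟩
      exact ⟨μ, (isEigOf_fromBlocks X Y μ).mpr (Or.inr hμ), rfl⟩
    have hTsub : T ⊆ S ∪ {0} := by
      rintro x ⟨μ, hμ, rfl⟩
      rcases (isEigOf_fromBlocks X Y μ).mp hμ with ⟨rfl, -⟩ | h
      · right; simp
      · left; exact ⟨μ, h, rfl⟩
    have hSne : S.Nonempty := ⟨‖μ₀‖, μ₀, hμ₀, rfl⟩
    have hSbdd : BddAbove S := (normSet_finite Y).bddAbove
    have hTbdd : BddAbove T :=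
      (((normSet_finite Y).union (Set.finite_singleton 0)).bddAbove).mono hTsub
    show sSup T = sSup S
    apply le_antisymm
    · apply csSup_le (hSne.mono hSsub)
      intro x hx
      rcases hTsub hx with hx' | hx'
      · exact le_csSup hSbdd hx'
      · rw [Set.mem_singleton_iff] at hx'
        subst hx'
        exact le_trans (norm_nonneg μ₀) (le_csSup hSbdd ⟨μ₀, hμ₀, rfl⟩)
    · exact csSup_le_csSup hTbdd hSne hSsub

theorem stmt9 {N Mn : ℕ} (src tgt : Fin Mn → Fin N)
    (β δ : ℝ) (hβ : 0 < β) (hδ : 0 < δ) :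
    specRad
        ((Matrix.fromBlocks
            (-(δ • (1 : Matrix (Fin N) (Fin N) ℝ))) (0 : Matrix (Fin N) (Fin Mn) ℝ)
            (δ • (Cminus src)ᵀ)
            (-((β + 2 * δ) • (1 : Matrix (Fin Mn) (Fin Mn) ℝ))))⁻¹ *
          Matrix.fromBlocks
            (0 : Matrix (Fin N) (Fin N) ℝ) (β • Cplus tgt)
            (0 : Matrix (Fin Mn) (Fin N) ℝ) (β • (nbMatrix src tgt)ᵀ)) =
      β / (β + 2 * δ) * specRad (lineAdj src tgt + nbMatrix src tgt) := by
  have hc : β + 2 * δ ≠ 0 := by positivity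
  have hCC : (Cminus src)ᵀ * Cplus tgt = (lineAdj src tgt)ᵀ := by
    ext ℓ m
    simp [Matrix.mul_apply, Cminus, Cplus, lineAdj, Matrix.transpose_apply, ite_and, eq_comm]
  have hinv : (Matrix.fromBlocks
        (-(δ • (1 : Matrix (Fin N) (Fin N) ℝ))) (0 : Matrix (Fin N) (Fin Mn) ℝ)
        (δ • (Cminus src)ᵀ)
        (-((β + 2 * δ) • (1 : Matrix (Fin Mn) (Fin Mn) ℝ))))⁻¹ =
      Matrix.fromBlocks
        (-(δ⁻¹ • (1 : Matrix (Fin N) (Fin N) ℝ))) (0 : Matrix (Fin N) (Fin Mn) ℝ)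
        (-((β + 2 * δ)⁻¹ • (Cminus src)ᵀ))
        (-((β + 2 * δ)⁻¹ • (1 : Matrix (Fin Mn) (Fin Mn) ℝ))) := by
    apply Matrix.inv_eq_right_inv
    rw [Matrix.fromBlocks_multiply, ← Matrix.fromBlocks_one, Matrix.fromBlocks_inj]
    refine ⟨?_, ?_, ?_, ?_⟩ <;>
      simp only [Matrix.zero_mul, Matrix.mul_zero, add_zero, zero_add, neg_mul_neg, neg_mul,
        mul_neg, neg_neg, Matrix.mul_neg, Matrix.neg_mul, smul_neg, Matrix.smul_mul,
        Matrix.mul_smul, Matrix.one_mul, Matrix.mul_one, smul_smul]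
    · rw [inv_mul_cancel₀ hδ.ne', one_smul]; simp
    · simp
    · rw [inv_mul_cancel₀ hδ.ne', one_smul, inv_mul_cancel₀ hc, one_smul, neg_add_cancel]
    · rw [inv_mul_cancel₀ hc, one_smul]
  rw [hinv]
  have hprod : Matrix.fromBlocks
        (-(δ⁻¹ • (1 : Matrix (Fin N) (Fin N) ℝ))) (0 : Matrix (Fin N) (Fin Mn) ℝ)
        (-((β + 2 * δ)⁻¹ • (Cminus src)ᵀ))
        (-((β + 2 * δ)⁻¹ • (1 : Matrix (Fin Mn) (Fin Mn) ℝ))) *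
      Matrix.fromBlocks
        (0 : Matrix (Fin N) (Fin N) ℝ) (β • Cplus tgt)
        (0 : Matrix (Fin Mn) (Fin N) ℝ) (β • (nbMatrix src tgt)ᵀ) =
      Matrix.fromBlocks 0 (-(δ⁻¹ • (1 : Matrix (Fin N) (Fin N) ℝ)) * (β • Cplus tgt)) 0
        ((-(β / (β + 2 * δ))) • (lineAdj src tgt + nbMatrix src tgt)ᵀ) := by
    rw [Matrix.fromBlocks_multiply, Matrix.fromBlocks_inj]
    refine ⟨by simp, by simp, by simp, ?_⟩
    rw [Matrix.transpose_add]
    simp only [Matrix.neg_mul, Matrix.smul_mul, Matrix.mul_smul, Matrix.one_mul, smul_smul, hCC]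
    module
  rw [hprod, specRad_fromBlocks, specRad_smul _ (by
      simp only [ne_eq, neg_eq_zero]
      exact (div_pos hβ (by positivity)).ne'),
    specRad_transpose, abs_neg, abs_of_pos (div_pos hβ (by positivity))]
end

section
/- Under the hypotheses of the γ₂ > γ₁ theorem (strongly connected G, positive rates), the matrix 𝒜 = [[−D, C_+B'], [D'_2 C_-ᵀ, HᵀB' − B' − D'_1 − D'_2]] is irreducible, i.e., the directed graph on N + M nodes whose adjacency structure is given by the nonzero off-diagonal entries of 𝒜 is strongly connected. -/
open Matrix

theorem stmt13 {N Mn : ℕ} (hN : 2 ≤ N) (src tgt : Fin Mn → Fin N)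
    (hloop : ∀ ℓ, src ℓ ≠ tgt ℓ)
    (hinj : Function.Injective fun ℓ => (src ℓ, tgt ℓ))
    (hconn : ∀ i j : Fin N,
      Relation.ReflTransGen (fun a b => ∃ ℓ, src ℓ = a ∧ tgt ℓ = b) i j)
    (β : Fin N → Fin N → ℝ) (hβ : ∀ ℓ, 0 < β (src ℓ) (tgt ℓ))
    (δ : Fin N → ℝ) (hδ : ∀ i, 0 < δ i) :
    IsIrreducibleMatrix (Matrix.fromBlocks
        (-(Matrix.diagonal δ))
        (Cplus tgt * Matrix.diagonal (fun ℓ => β (src ℓ) (tgt ℓ)))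
        (Matrix.diagonal (fun ℓ => δ (tgt ℓ)) * (Cminus src)ᵀ)
        ((nbMatrix src tgt)ᵀ * Matrix.diagonal (fun ℓ => β (src ℓ) (tgt ℓ)) -
          Matrix.diagonal (fun ℓ => β (src ℓ) (tgt ℓ)) -
          Matrix.diagonal (fun ℓ => δ (src ℓ)) -
          Matrix.diagonal (fun ℓ => δ (tgt ℓ)))) := by

  classical
  set 𝒜 := Matrix.fromBlocks
      (-(Matrix.diagonal δ))
      (Cplus tgt * Matrix.diagonal (fun ℓ => β (src ℓ) (tgt ℓ)))
      (Matrix.diagonal (fun ℓ => δ (tgt ℓ)) * (Cminus src)ᵀ)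
      ((nbMatrix src tgt)ᵀ * Matrix.diagonal (fun ℓ => β (src ℓ) (tgt ℓ)) -
        Matrix.diagonal (fun ℓ => β (src ℓ) (tgt ℓ)) -
        Matrix.diagonal (fun ℓ => δ (src ℓ)) -
        Matrix.diagonal (fun ℓ => δ (tgt ℓ))) with h𝒜
  set rel : (Fin N ⊕ Fin Mn) → (Fin N ⊕ Fin Mn) → Prop :=
    fun a b => a ≠ b ∧ 𝒜 a b ≠ 0 with hrel
  have R1 : ∀ ℓ : Fin Mn, rel (Sum.inl (tgt ℓ)) (Sum.inr ℓ) := by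
    intro ℓ
    refine ⟨by simp, ?_⟩
    have : 𝒜 (Sum.inl (tgt ℓ)) (Sum.inr ℓ) = β (src ℓ) (tgt ℓ) := by
      simp [h𝒜, Matrix.fromBlocks_apply₁₂, Matrix.mul_diagonal, Cplus]
    rw [this]
    exact (hβ ℓ).ne'
  have R2 : ∀ ℓ : Fin Mn, rel (Sum.inr ℓ) (Sum.inl (src ℓ)) := by
    intro ℓ
    refine ⟨by simp, ?_⟩
    have : 𝒜 (Sum.inr ℓ) (Sum.inl (src ℓ)) = δ (tgt ℓ) := by
      simp [h𝒜, Matrix.fromBlocks_apply₂₁, Matrix.diagonal_mul, Cminus,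
        Matrix.transpose_apply]
    rw [this]
    exact (hδ (tgt ℓ)).ne'
  have node : ∀ i j : Fin N,
      Relation.ReflTransGen rel (Sum.inl i) (Sum.inl j) := by
    intro i j
    have h := hconn j i
    induction h with
    | refl => exact Relation.ReflTransGen.refl
    | tail _ h2 ih =>
      obtain ⟨ℓ, hs, ht⟩ := h2
      subst hs; subst ht
      exact Relation.ReflTransGen.head (R1 ℓ)
        (Relation.ReflTransGen.head (R2 ℓ) ih)
  intro a b
  match a, b with
  | Sum.inl i, Sum.inl j => exact node i j
  | Sum.inl i, Sum.inr m => exact (node i (tgt m)).tail (R1 m)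
  | Sum.inr ℓ, Sum.inl j => exact Relation.ReflTransGen.head (R2 ℓ) (node (src ℓ) j)
  | Sum.inr ℓ, Sum.inr m =>
      exact Relation.ReflTransGen.head (R2 ℓ) ((node (src ℓ) (tgt m)).tail (R1 m))
end
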